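/- Let C be an n×n correlation matrix. Then rank(C ∘ conj(C)) · N(C) ≥ n², where N(C) is the number of nonzero entries of C. -/

import Mathlib

/-!
Let `M = C ∘ conj C`, the Hermitian matrix with entries `|c_ij|²`. Its eigenvalues `λ_i` satisfy
`∑ λ_i = tr M = n` and `∑ λ_i² = tr (M M) = ∑_ij |c_ij|⁴`. Cauchy–Schwarz over the `rank M`
nonzero eigenvalues gives `n² ≤ rank M · ∑_ij |c_ij|⁴`, and since a correlation matrix has
`|c_ij| ≤ 1` (its `2 × 2` principal minors are nonnegative), `∑_ij |c_ij|⁴ ≤ N(C)`.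
-/

open scoped ComplexOrder

open Matrix Finset

lemma Finset.sum_norm_pow_le_card_filter_ne_zero {α E : Type*} [NormedAddCommGroup E]
    [DecidableEq E] (s : Finset α) {f : α → E} (hf : ∀ a ∈ s, ‖f a‖ ≤ 1) {k : ℕ} (hk : k ≠ 0) :
    ∑ a ∈ s, ‖f a‖ ^ k ≤ #{a ∈ s | f a ≠ 0} := by
  rw [← Finset.sum_filter_of_ne (p := fun a => f a ≠ 0) fun a _ h hfa => h (by simp [hfa, hk])]
  simpa using Finset.sum_le_card_nsmul _ _ 1 fun a ha =>
    pow_le_one₀ (norm_nonneg _) (hf a (Finset.mem_filter.mp ha).1)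

namespace Matrix

variable {ι 𝕜 : Type*} [RCLike 𝕜]

lemma PosSemidef.norm_sq_apply_le {A : Matrix ι ι 𝕜} (hA : A.PosSemidef) (i j : ι) :
    ‖A i j‖ ^ 2 ≤ RCLike.re (A i i) * RCLike.re (A j j) := by
  classical
  have hdet := (hA.submatrix ![i, j]).det_nonneg
  simp only [det_fin_two, submatrix_apply, cons_val_zero, cons_val_one, sub_nonneg] at hdet
  have hii : (RCLike.re (A i i) : 𝕜) = A i i := RCLike.conj_eq_iff_re.mp (hA.isHermitian.apply i i)
  have hjj : (RCLike.re (A j j) : 𝕜) = A j j := RCLike.conj_eq_iff_re.mp (hA.isHermitian.apply j j)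
  rw [← hA.isHermitian.apply j i, RCLike.star_def, RCLike.mul_conj, ← hii, ← hjj] at hdet
  exact_mod_cast hdet

lemma PosSemidef.norm_apply_le_one {A : Matrix ι ι 𝕜} (hA : A.PosSemidef) (hdiag : ∀ i, A i i = 1)
    (i j : ι) : ‖A i j‖ ≤ 1 := by
  have := hA.norm_sq_apply_le i j
  rw [hdiag, hdiag, RCLike.one_re, one_mul] at this
  exact (sq_le_one_iff₀ (norm_nonneg _)).mp this

lemma hadamard_map_conj_apply {m n : Type*} (A : Matrix m n 𝕜) (i : m) (j : n) :
    (A ⊙ A.map (starRingEnd 𝕜)) i j = ((‖A i j‖ ^ 2 : ℝ) : 𝕜) := by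
  simp [RCLike.mul_conj]

lemma IsHermitian.hadamard_map_conj {A : Matrix ι ι 𝕜} (hA : A.IsHermitian) :
    (A ⊙ A.map (starRingEnd 𝕜)).IsHermitian :=
  hA.hadamard (hA.map _ fun _ => rfl)

variable [Fintype ι]

lemma IsHermitian.trace_mul_self_eq_sum_eigenvalues [DecidableEq ι] {A : Matrix ι ι 𝕜}
    (hA : A.IsHermitian) : (A * A).trace = ∑ i, ((hA.eigenvalues i ^ 2 : ℝ) : 𝕜) := by
  conv_lhs => rw [hA.spectral_theorem]
  rw [← map_mul, Unitary.conjStarAlgAut_apply, trace_mul_cycle, Unitary.coe_star_mul_self,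
    one_mul, diagonal_mul_diagonal, trace_diagonal]
  simp [sq]

lemma IsHermitian.trace_mul_self_eq_sum_norm_sq {A : Matrix ι ι 𝕜} (hA : A.IsHermitian) :
    (A * A).trace = ((∑ i, ∑ j, ‖A i j‖ ^ 2 : ℝ) : 𝕜) := by
  simp only [trace, diag, mul_apply]
  push_cast
  refine Finset.sum_congr rfl fun i _ => Finset.sum_congr rfl fun j _ => ?_
  rw [← hA.apply j i, RCLike.star_def, RCLike.mul_conj]

lemma IsHermitian.sq_re_trace_le_rank_mul {A : Matrix ι ι 𝕜} (hA : A.IsHermitian) :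
    RCLike.re A.trace ^ 2 ≤ A.rank * RCLike.re (A * A).trace := by
  classical
  rw [hA.trace_eq_sum_eigenvalues, hA.trace_mul_self_eq_sum_eigenvalues,
    hA.rank_eq_card_non_zero_eigs, Fintype.card_subtype]
  simp only [map_sum, RCLike.ofReal_re]
  set s := Finset.univ.filter fun i => hA.eigenvalues i ≠ 0
  calc (∑ i, hA.eigenvalues i) ^ 2 = (∑ i ∈ s, hA.eigenvalues i) ^ 2 := by
        rw [Finset.sum_filter_ne_zero]
    _ ≤ (#s : ℝ) * ∑ i ∈ s, hA.eigenvalues i ^ 2 := sq_sum_le_card_mul_sum_sq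
    _ ≤ (#s : ℝ) * ∑ i, hA.eigenvalues i ^ 2 := by
        gcongr
        exact subset_univ s

end Matrix

/-- For an `n × n` correlation matrix `C`, `rank(C ∘ conj C) · N(C) ≥ n²`, where
`N(C)` is the number of nonzero entries of `C`. -/
theorem rank_hadamard_conj_mul_card_nonzero {n : ℕ} (C : Matrix (Fin n) (Fin n) ℂ)
    (hC : C.PosSemidef) (hdiag : ∀ i, C i i = 1) :
    n ^ 2 ≤ (C ⊙ C.map (starRingEnd ℂ)).rank *
      (Finset.univ.filter (fun q : Fin n × Fin n => C q.1 q.2 ≠ 0)).card := by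
  set M := C ⊙ C.map (starRingEnd ℂ)
  have hM : M.IsHermitian := hC.isHermitian.hadamard_map_conj
  have htrace : RCLike.re M.trace = n := by
    simp [M, trace, hdiag]
  have htrace_sq : RCLike.re (M * M).trace ≤ #{q : Fin n × Fin n | C q.1 q.2 ≠ 0} := by
    rw [hM.trace_mul_self_eq_sum_norm_sq, RCLike.ofReal_re, ← Fintype.sum_prod_type']
    simp only [M, hadamard_map_conj_apply, RCLike.norm_ofReal, abs_pow, abs_norm, ← pow_mul]
    exact Finset.sum_norm_pow_le_card_filter_ne_zero _
      (fun q _ => hC.norm_apply_le_one hdiag q.1 q.2) (by norm_num)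
  have key : (n : ℝ) ^ 2 ≤ M.rank * #{q : Fin n × Fin n | C q.1 q.2 ≠ 0} :=
    htrace ▸ hM.sq_re_trace_le_rank_mul |>.trans (by gcongr)
  exact_mod_cast key
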